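/- arXiv:2512.20465 — 4 statements merged into one kernel-verified Lean document; each statement's English description precedes it below -/
import Mathlib

section
/- Let A and C be unital associative algebras over a field k and let ψ: A⊗C → C⊗A be a k-linear map. The multiplication m^ψ := (m_C⊗m_A)∘(id_C⊗ψ⊗id_A) on C⊗A is associative if and only if ψ satisfies (id_C⊗m_A)∘(ψ⊗id_A)∘(id_A⊗m_C⊗id_A)∘(id_A⊗id_C⊗ψ) = (m_C⊗id_A)∘(id_C⊗ψ)∘(id_C⊗m_A⊗id_C)∘(ψ⊗id_A⊗id_C) as maps A⊗C⊗A⊗C → C⊗A. -/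
open TensorProduct LinearMap Function

noncomputable section
namespace Paper

variable (k : Type*) [Field k]
section Twist
variable (A : Type*) [Ring A] [Algebra k A] (C : Type*) [Ring C] [Algebra k C]

/-- The twisted multiplication `m^ψ := (m_C ⊗ m_A) ∘ (id_C ⊗ ψ ⊗ id_A)` as a linear map
`(C ⊗ A) ⊗ (C ⊗ A) → C ⊗ A`. -/
def tmulMap (ψ : A ⊗[k] C →ₗ[k] C ⊗[k] A) :
    (C ⊗[k] A) ⊗[k] (C ⊗[k] A) →ₗ[k] C ⊗[k] A :=
  TensorProduct.map (LinearMap.mul' k C) (LinearMap.mul' k A)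
    ∘ₗ (TensorProduct.assoc k (C ⊗[k] C) A A).toLinearMap
    ∘ₗ TensorProduct.map (TensorProduct.assoc k C C A).symm.toLinearMap LinearMap.id
    ∘ₗ TensorProduct.map (LinearMap.lTensor C ψ) LinearMap.id
    ∘ₗ TensorProduct.map (TensorProduct.assoc k C A C).toLinearMap LinearMap.id
    ∘ₗ (TensorProduct.assoc k (C ⊗[k] A) C A).symm.toLinearMap

/-- The twisted product of two elements of `C ⊗ A`. -/
def tmul (ψ : A ⊗[k] C →ₗ[k] C ⊗[k] A) (x y : C ⊗[k] A) : C ⊗[k] A :=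
  tmulMap k A C ψ (x ⊗ₜ y)

/-- `ψ` is a twisting map when the product `m^ψ` is associative. -/
def IsTwistingMap (ψ : A ⊗[k] C →ₗ[k] C ⊗[k] A) : Prop :=
  ∀ x y z : C ⊗[k] A,
    tmul k A C ψ (tmul k A C ψ x y) z = tmul k A C ψ x (tmul k A C ψ y z)

/-- `ψ (a ⊗ 1_C) = 1_C ⊗ a`. -/
def LeftNormal (ψ : A ⊗[k] C →ₗ[k] C ⊗[k] A) : Prop :=
  ∀ a : A, ψ (a ⊗ₜ (1 : C)) = (1 : C) ⊗ₜ a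

/-- `ψ (1_A ⊗ c) = c ⊗ 1_A`. -/
def RightNormal (ψ : A ⊗[k] C →ₗ[k] C ⊗[k] A) : Prop :=
  ∀ c : C, ψ ((1 : A) ⊗ₜ c) = c ⊗ₜ (1 : A)

/-- Distributive law (C1): `ψ ∘ (m_A ⊗ id_C) = (id_C ⊗ m_A) ∘ (ψ ⊗ id_A) ∘ (id_A ⊗ ψ)`. -/
def DistLawC1 (ψ : A ⊗[k] C →ₗ[k] C ⊗[k] A) : Prop :=
  ψ ∘ₗ rTensor C (LinearMap.mul' k A)
    = lTensor C (LinearMap.mul' k A)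
        ∘ₗ (TensorProduct.assoc k C A A).toLinearMap
        ∘ₗ rTensor A ψ
        ∘ₗ (TensorProduct.assoc k A C A).symm.toLinearMap
        ∘ₗ lTensor A ψ
        ∘ₗ (TensorProduct.assoc k A A C).toLinearMap

/-- Distributive law (C2): `ψ ∘ (id_A ⊗ m_C) = (m_C ⊗ id_A) ∘ (id_C ⊗ ψ) ∘ (ψ ⊗ id_C)`. -/
def DistLawC2 (ψ : A ⊗[k] C →ₗ[k] C ⊗[k] A) : Prop :=
  ψ ∘ₗ lTensor A (LinearMap.mul' k C)
    = rTensor A (LinearMap.mul' k C)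
        ∘ₗ (TensorProduct.assoc k C C A).symm.toLinearMap
        ∘ₗ lTensor C ψ
        ∘ₗ (TensorProduct.assoc k C A C).toLinearMap
        ∘ₗ rTensor C ψ
        ∘ₗ (TensorProduct.assoc k A C C).symm.toLinearMap

/-- The left-hand side of the associativity condition (Oeq):
`(id_C ⊗ m_A) ∘ (ψ ⊗ id_A) ∘ (id_A ⊗ m_C ⊗ id_A) ∘ (id_A ⊗ id_C ⊗ ψ)`. -/
def OeqLHS (ψ : A ⊗[k] C →ₗ[k] C ⊗[k] A) :
    (A ⊗[k] C) ⊗[k] (A ⊗[k] C) →ₗ[k] C ⊗[k] A :=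
  lTensor C (LinearMap.mul' k A)
    ∘ₗ (TensorProduct.assoc k C A A).toLinearMap
    ∘ₗ rTensor A ψ
    ∘ₗ TensorProduct.map (lTensor A (LinearMap.mul' k C)) LinearMap.id
    ∘ₗ TensorProduct.map (TensorProduct.assoc k A C C).toLinearMap LinearMap.id
    ∘ₗ (TensorProduct.assoc k (A ⊗[k] C) C A).symm.toLinearMap
    ∘ₗ lTensor (A ⊗[k] C) ψ

/-- The right-hand side of the associativity condition (Oeq):
`(m_C ⊗ id_A) ∘ (id_C ⊗ ψ) ∘ (id_C ⊗ m_A ⊗ id_C) ∘ (ψ ⊗ id_A ⊗ id_C)`. -/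
def OeqRHS (ψ : A ⊗[k] C →ₗ[k] C ⊗[k] A) :
    (A ⊗[k] C) ⊗[k] (A ⊗[k] C) →ₗ[k] C ⊗[k] A :=
  rTensor A (LinearMap.mul' k C)
    ∘ₗ (TensorProduct.assoc k C C A).symm.toLinearMap
    ∘ₗ lTensor C ψ
    ∘ₗ (TensorProduct.assoc k C A C).toLinearMap
    ∘ₗ TensorProduct.map (lTensor C (LinearMap.mul' k A)) LinearMap.id
    ∘ₗ TensorProduct.map (TensorProduct.assoc k C A A).toLinearMap LinearMap.id
    ∘ₗ (TensorProduct.assoc k (C ⊗[k] A) A C).symm.toLinearMap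
    ∘ₗ rTensor (A ⊗[k] C) ψ

/-- The set of relations `c ⊗ (b·a) - (c·F(b)) ⊗ a` defining the push-forward `C ⊗_B A`. -/
def relSet (B : Subalgebra k A) (F : B →ₐ[k] C) : Set (C ⊗[k] A) :=
  {x | ∃ (c : C) (b : B) (a : A), x = c ⊗ₜ ((b : A) * a) - (c * F b) ⊗ₜ a}

/-- The subspace spanned by the relations defining the push-forward `C ⊗_B A`. -/
def relSpan (B : Subalgebra k A) (F : B →ₐ[k] C) : Submodule k (C ⊗[k] A) :=
  Submodule.span k (relSet k A C B F)

end Twist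
section Star
variable [StarRing k] [TrivialStar k]
variable (X : Type*) [Ring X] [Algebra k X] [StarRing X] [StarModule k X]
variable (Y : Type*) [Ring Y] [Algebra k Y] [StarRing Y] [StarModule k Y]

/-- The map `(∗_Y ⊗ ∗_X) ∘ flip : X ⊗ Y → Y ⊗ X`, `x ⊗ y ↦ y* ⊗ x*`. -/
def starFlip : X ⊗[k] Y →ₗ[k] Y ⊗[k] X :=
  TensorProduct.lift (LinearMap.mk₂ k (fun x y => (star y : Y) ⊗ₜ[k] (star x : X))
    (fun x x' y => by simp [star_add, TensorProduct.tmul_add])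
    (fun r x y => by simp [star_smul, star_trivial, TensorProduct.tmul_smul])
    (fun x y y' => by simp [star_add, TensorProduct.add_tmul])
    (fun r x y => by simp [star_smul, star_trivial, TensorProduct.smul_tmul']))

@[simp] lemma starFlip_tmul (x : X) (y : Y) :
    starFlip k X Y (x ⊗ₜ y) = (star y : Y) ⊗ₜ (star x : X) := rfl

end Star
section Flat
variable (R : Type*) [Ring R] (M : Type*) [AddCommGroup M] [Module R M]

/-- Flatness of a left module over a (possibly noncommutative) ring, via the equational
criterion: every linear relation among elements of `M` is a consequence of linear relations
holding in `R`. -/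
def IsFlatLeft : Prop :=
  ∀ (n : ℕ) (r : Fin n → R) (x : Fin n → M), (∑ i, r i • x i) = 0 →
    ∃ (m : ℕ) (a : Fin n → Fin m → R) (y : Fin m → M),
      (∀ i, x i = ∑ j, a i j • y j) ∧ ∀ j, (∑ i, r i * a i j) = 0

/-- Faithful flatness of a left module over a (possibly noncommutative) ring: flatness
together with `I·M ≠ M` for every maximal right ideal `I` of `R`. -/
def IsFaithfullyFlatLeft : Prop :=
  IsFlatLeft R M ∧ ∀ I : Submodule Rᵐᵒᵖ R, IsCoatom I →
    AddSubgroup.closure {z : M | ∃ i ∈ I, ∃ v : M, z = i • v} ≠ ⊤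

end Flat
section Hopf
variable (A : Type*) [Ring A] [Algebra k A] (C : Type*) [Ring C] [Algebra k C]
variable (H : Type*) [Ring H] [HopfAlgebra k H]

/-- `δ : A → A ⊗ H` makes `A` a right `H`-comodule algebra: `δ` is an algebra map (built in)
which is coassociative and counital. -/
def IsComodAlg (δ : A →ₐ[k] A ⊗[k] H) : Prop :=
  ((TensorProduct.assoc k A H H).toLinearMap ∘ₗ rTensor H δ.toLinearMap ∘ₗ δ.toLinearMap
      = lTensor A (Coalgebra.comul (R := k) (A := H)) ∘ₗ δ.toLinearMap)
    ∧ ((TensorProduct.rid k A).toLinearMap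
        ∘ₗ lTensor A (Coalgebra.counit (R := k) (A := H)) ∘ₗ δ.toLinearMap
      = LinearMap.id)

/-- The subalgebra `A^{co H}` of coinvariant elements of a comodule algebra. -/
def coinv (δ : A →ₐ[k] A ⊗[k] H) : Subalgebra k A where
  carrier := {a | δ a = a ⊗ₜ[k] (1 : H)}
  mul_mem' := by
    intro a b ha hb
    simp only [Set.mem_setOf_eq] at *
    rw [map_mul, ha, hb, Algebra.TensorProduct.tmul_mul_tmul, one_mul]
  one_mem' := by
    simp only [Set.mem_setOf_eq, map_one, Algebra.TensorProduct.one_def]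
  add_mem' := by
    intro a b ha hb
    simp only [Set.mem_setOf_eq] at *
    rw [map_add, ha, hb, TensorProduct.add_tmul]
  algebraMap_mem' := by
    intro r
    simp only [Set.mem_setOf_eq, AlgHom.commutes, Algebra.TensorProduct.algebraMap_apply]

/-- The canonical map `A ⊗ A → A ⊗ H`, `a ⊗ a' ↦ a a'₍₀₎ ⊗ a'₍₁₎` (before taking the
quotient `A ⊗_B A`). -/
def chi0 (δ : A →ₐ[k] A ⊗[k] H) : A ⊗[k] A →ₗ[k] A ⊗[k] H :=
  rTensor H (LinearMap.mul' k A)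
    ∘ₗ (TensorProduct.assoc k A A H).symm.toLinearMap
    ∘ₗ lTensor A δ.toLinearMap

/-- The coaction `id_C ⊗ δ` on `C ⊗ A` (with `C` a trivial comodule), as a map
`C ⊗ A → (C ⊗ A) ⊗ H`. -/
def coactT (δ : A →ₐ[k] A ⊗[k] H) : C ⊗[k] A →ₗ[k] (C ⊗[k] A) ⊗[k] H :=
  (TensorProduct.assoc k C A H).symm.toLinearMap ∘ₗ lTensor C δ.toLinearMap

/-- `ψ : A ⊗ C → C ⊗ A` is a morphism of right `H`-comodules:
`(id_C ⊗ δ) ∘ ψ = (ψ ⊗ id_H) ∘ (id_A ⊗ flip) ∘ (δ ⊗ id_C)`. -/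
def IsComodMor (δ : A →ₐ[k] A ⊗[k] H) (ψ : A ⊗[k] C →ₗ[k] C ⊗[k] A) : Prop :=
  lTensor C δ.toLinearMap ∘ₗ ψ
    = (TensorProduct.assoc k C A H).toLinearMap
        ∘ₗ rTensor H ψ
        ∘ₗ (TensorProduct.assoc k A C H).symm.toLinearMap
        ∘ₗ lTensor A (TensorProduct.comm k H C).toLinearMap
        ∘ₗ (TensorProduct.assoc k A H C).toLinearMap
        ∘ₗ rTensor C δ.toLinearMap

variable {k H} in
/-- Given a multiplication `m` on `P`, the induced multiplication on `P ⊗ H`. -/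
def tmulH {P : Type*} [AddCommGroup P] [Module k P] (m : P →ₗ[k] P →ₗ[k] P) :
    P ⊗[k] H →ₗ[k] P ⊗[k] H →ₗ[k] P ⊗[k] H :=
  TensorProduct.map₂ m (LinearMap.mul k H)

variable {k H} in
/-- The canonical Galois map `P ⊗ P → P ⊗ H`, `x ⊗ y ↦ (x ·_m y₍₀₎) ⊗ y₍₁₎`, for a
multiplication `m` and a coaction `db` on `P`. -/
def chiP {P : Type*} [AddCommGroup P] [Module k P]
    (m : P →ₗ[k] P →ₗ[k] P) (db : P →ₗ[k] P ⊗[k] H) : P ⊗[k] P →ₗ[k] P ⊗[k] H :=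
  rTensor H (TensorProduct.lift m)
    ∘ₗ (TensorProduct.assoc k P P H).symm.toLinearMap
    ∘ₗ lTensor P db

variable {k C} in
/-- The span of the relations `(x ·_m e c) ⊗ y - x ⊗ (e c ·_m y)` defining the balanced tensor
product `P ⊗_C P` over the image of `C` in `P`. -/
def balSpan {P : Type*} [AddCommGroup P] [Module k P]
    (m : P →ₗ[k] P →ₗ[k] P) (e : C → P) : Submodule k (P ⊗[k] P) :=
  Submodule.span k {z | ∃ (x y : P) (c : C), z = (m x (e c)) ⊗ₜ y - x ⊗ₜ (m (e c) y)}

variable {k H} in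
/-- Coassociativity of a coaction `db : P → P ⊗ H`. -/
def Coassoc {P : Type*} [AddCommGroup P] [Module k P] (db : P →ₗ[k] P ⊗[k] H) : Prop :=
  (TensorProduct.assoc k P H H).toLinearMap ∘ₗ rTensor H db ∘ₗ db
    = lTensor P (Coalgebra.comul (R := k) (A := H)) ∘ₗ db

variable {k H} in
/-- Counitality of a coaction `db : P → P ⊗ H`. -/
def Counital {P : Type*} [AddCommGroup P] [Module k P] (db : P →ₗ[k] P ⊗[k] H) : Prop :=
  (TensorProduct.rid k P).toLinearMap
      ∘ₗ lTensor P (Coalgebra.counit (R := k) (A := H)) ∘ₗ db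
    = LinearMap.id

variable {k H} in
/-- Convolution product of two linear maps `H → P`, with respect to a multiplication `m`
on `P`. -/
def convP {P : Type*} [AddCommGroup P] [Module k P]
    (m : P →ₗ[k] P →ₗ[k] P) (f g : H →ₗ[k] P) : H →ₗ[k] P :=
  TensorProduct.lift m ∘ₗ TensorProduct.map f g ∘ₗ Coalgebra.comul (R := k) (A := H)

variable {k H} in
/-- The unit for convolution: `h ↦ ε(h) • u`. -/
def convUnit {P : Type*} [AddCommGroup P] [Module k P] (u : P) : H →ₗ[k] P :=
  (Coalgebra.counit (R := k) (A := H)).smulRight u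

end Hopf

section HopfPush
variable (A : Type*) [Ring A] [Algebra k A] (C : Type*) [Ring C] [Algebra k C]
variable (H : Type*) [Ring H] [HopfAlgebra k H]
section PushForward
variable (δ : A →ₐ[k] A ⊗[k] H) (F : coinv k A H δ →ₐ[k] C)

/-- The subspace of `C ⊗ A` defining the push-forward `C ⊗_B A`, `B = A^{co H}`. -/
def pushSpan : Submodule k (C ⊗[k] A) := relSpan k A C (coinv k A H δ) F

/-- The quotient map `C ⊗ A → C ⊗_B A`. -/
def pushQ : C ⊗[k] A →ₗ[k] (C ⊗[k] A) ⧸ pushSpan k A C H δ F :=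
  (pushSpan k A C H δ F).mkQ

/-- `\barψ = π_B ∘ ψ` is a `B`-bimodule morphism. -/
def BarBimod (ψ : A ⊗[k] C →ₗ[k] C ⊗[k] A) : Prop :=
  (∀ (b : coinv k A H δ) (a : A) (c : C),
      pushQ k A C H δ F (ψ (((b : A) * a) ⊗ₜ c))
        = pushQ k A C H δ F (rTensor A (LinearMap.mulLeft k (F b)) (ψ (a ⊗ₜ c))))
  ∧ (∀ (b : coinv k A H δ) (a : A) (c : C),
      pushQ k A C H δ F (ψ (a ⊗ₜ (c * F b)))
        = pushQ k A C H δ F (lTensor C (LinearMap.mulRight k (b : A)) (ψ (a ⊗ₜ c))))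

/-- `\barψ (1_A ⊗ c) = c ⊗_B 1_A` and `\barψ (a ⊗ 1_C) = 1_C ⊗_B a`. -/
def BarNormal (ψ : A ⊗[k] C →ₗ[k] C ⊗[k] A) : Prop :=
  (∀ c : C, pushQ k A C H δ F (ψ ((1 : A) ⊗ₜ c)) = pushQ k A C H δ F (c ⊗ₜ (1 : A)))
  ∧ (∀ a : A, pushQ k A C H δ F (ψ (a ⊗ₜ (1 : C))) = pushQ k A C H δ F ((1 : C) ⊗ₜ a))

/-- `σ` is the canonical left `C`-action on the push-forward `C ⊗_B A`:
`σ c (c' ⊗_B a) = (c c') ⊗_B a`. -/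
def SigmaSpec (σ : C →ₗ[k] ((C ⊗[k] A) ⧸ pushSpan k A C H δ F)
    →ₗ[k] ((C ⊗[k] A) ⧸ pushSpan k A C H δ F)) : Prop :=
  ∀ (c : C) (x : C ⊗[k] A),
    σ c (pushQ k A C H δ F x) = pushQ k A C H δ F (rTensor A (LinearMap.mulLeft k c) x)

/-- The distributive law `\barψ (a ⊗ c c') = c^ψ · \barψ (a^ψ ⊗ c')`, where `·` denotes the
left `C`-action `σ` on the push-forward. -/
def BarDistrib (ψ : A ⊗[k] C →ₗ[k] C ⊗[k] A)
    (σ : C →ₗ[k] ((C ⊗[k] A) ⧸ pushSpan k A C H δ F)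
      →ₗ[k] ((C ⊗[k] A) ⧸ pushSpan k A C H δ F)) : Prop :=
  (pushQ k A C H δ F ∘ₗ ψ) ∘ₗ lTensor A (LinearMap.mul' k C)
    = TensorProduct.lift σ
        ∘ₗ lTensor C (pushQ k A C H δ F ∘ₗ ψ)
        ∘ₗ (TensorProduct.assoc k C A C).toLinearMap
        ∘ₗ rTensor C ψ
        ∘ₗ (TensorProduct.assoc k A C C).symm.toLinearMap

/-- The embedding `C → C ⊗_B A`, `c ↦ c ⊗_B 1_A`. -/
def eC : C → (C ⊗[k] A) ⧸ pushSpan k A C H δ F :=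
  fun c => pushQ k A C H δ F (c ⊗ₜ (1 : A))

end PushForward

section Galois
variable (δ : A →ₐ[k] A ⊗[k] H)

/-- The subspace of `A ⊗ A` defining the balanced tensor product `A ⊗_B A`, `B = A^{co H}`. -/
def galSpan : Submodule k (A ⊗[k] A) :=
  relSpan k A A (coinv k A H δ) (coinv k A H δ).val

/-- The quotient map `A ⊗ A → A ⊗_B A`. -/
def galQ : A ⊗[k] A →ₗ[k] (A ⊗[k] A) ⧸ galSpan k A H δ := (galSpan k A H δ).mkQ

/-- The translation map `τ = χ⁻¹(1_A ⊗ -) : H → A ⊗_B A` obtained from a bijective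
canonical map `χ`. -/
def transMap (χ : ((A ⊗[k] A) ⧸ galSpan k A H δ) ≃ₗ[k] A ⊗[k] H) :
    H →ₗ[k] (A ⊗[k] A) ⧸ galSpan k A H δ :=
  χ.symm.toLinearMap ∘ₗ TensorProduct.mk k A H 1

end Galois
end HopfPush
end Paper
namespace Paper
section Aux
variable {k : Type*} [Field k] {A : Type*} [Ring A] [Algebra k A]
  {C : Type*} [Ring C] [Algebra k C] (ψ : A ⊗[k] C →ₗ[k] C ⊗[k] A)
set_option maxHeartbeats 1000000
set_option synthInstance.maxHeartbeats 200000
lemma tmul_pure (c c' : C) (a a' : A) :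
    tmul k A C ψ (c ⊗ₜ a) (c' ⊗ₜ a')
      = TensorProduct.map (LinearMap.mulLeft k c) (LinearMap.mulRight k a') (ψ (a ⊗ₜ c')) := by
  unfold Paper.tmul tmulMap
  simp only [coe_comp, comp_apply, LinearEquiv.coe_coe, TensorProduct.assoc_symm_tmul,
    TensorProduct.map_tmul, TensorProduct.assoc_tmul, id_coe, id_eq, lTensor_tmul]
  generalize ψ (a ⊗ₜ[k] c') = w
  induction w using TensorProduct.induction_on with
  | zero => simp only [TensorProduct.tmul_zero, TensorProduct.zero_tmul, LinearEquiv.map_zero, map_zero]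
  | tmul d b =>
      simp only [TensorProduct.assoc_symm_tmul, TensorProduct.assoc_tmul,
        TensorProduct.map_tmul, mul'_apply, LinearMap.mulLeft_apply, LinearMap.mulRight_apply]
  | add u v hu hv =>
      simp only [TensorProduct.tmul_add, TensorProduct.add_tmul, LinearEquiv.map_add, map_add, hu, hv]

lemma tmul_zero_left (z : C ⊗[k] A) : tmul k A C ψ 0 z = 0 := by
  unfold Paper.tmul; rw [TensorProduct.zero_tmul, map_zero]

lemma tmul_add_left (x y z : C ⊗[k] A) :
    tmul k A C ψ (x + y) z = tmul k A C ψ x z + tmul k A C ψ y z := by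
  unfold Paper.tmul; rw [TensorProduct.add_tmul, map_add]

lemma tmul_zero_right (z : C ⊗[k] A) : tmul k A C ψ z 0 = 0 := by
  unfold Paper.tmul; rw [TensorProduct.tmul_zero, map_zero]

lemma tmul_add_right (x y z : C ⊗[k] A) :
    tmul k A C ψ z (x + y) = tmul k A C ψ z x + tmul k A C ψ z y := by
  unfold Paper.tmul; rw [TensorProduct.tmul_add, map_add]

lemma G1 (c₀ c c' : C) (a a' a'' : A) :
    tmul k A C ψ (tmul k A C ψ (c₀ ⊗ₜ a) (c ⊗ₜ a')) (c' ⊗ₜ a'')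
      = TensorProduct.map (LinearMap.mulLeft k c₀) (LinearMap.mulRight k a'')
          (OeqRHS k A C ψ ((a ⊗ₜ c) ⊗ₜ (a' ⊗ₜ c'))) := by
  rw [tmul_pure]
  unfold OeqRHS
  simp only [coe_comp, comp_apply, LinearEquiv.coe_coe, rTensor_tmul, id_coe, id_eq]
  generalize ψ (a ⊗ₜ[k] c) = w
  induction w using TensorProduct.induction_on with
  | zero =>
      simp only [map_zero, tmul_zero_left, TensorProduct.zero_tmul]
  | tmul d b =>
      simp only [coe_comp, comp_apply, LinearEquiv.coe_coe, TensorProduct.assoc_tmul,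
        TensorProduct.assoc_symm_tmul, TensorProduct.map_tmul, lTensor_tmul, rTensor_tmul,
        mul'_apply, LinearMap.mulLeft_apply, LinearMap.mulRight_apply, id_coe, id_eq]
      rw [tmul_pure]
      generalize ψ ((b * a') ⊗ₜ[k] c') = v
      induction v using TensorProduct.induction_on with
      | zero => simp only [map_zero, TensorProduct.tmul_zero]
      | tmul e f =>
          simp only [coe_comp, comp_apply, LinearEquiv.coe_coe, TensorProduct.assoc_tmul,
        TensorProduct.assoc_symm_tmul, TensorProduct.map_tmul, lTensor_tmul, rTensor_tmul,
        mul'_apply, LinearMap.mulLeft_apply, LinearMap.mulRight_apply, id_coe, id_eq, mul_assoc]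
      | add u v hu hv =>
          simp only [TensorProduct.tmul_add, map_add, hu, hv]
  | add u v hu hv =>
      simp only [map_add, tmul_add_left, TensorProduct.add_tmul, hu, hv]

lemma G2 (c₀ c c' : C) (a a' a'' : A) :
    tmul k A C ψ (c₀ ⊗ₜ a) (tmul k A C ψ (c ⊗ₜ a') (c' ⊗ₜ a''))
      = TensorProduct.map (LinearMap.mulLeft k c₀) (LinearMap.mulRight k a'')
          (OeqLHS k A C ψ ((a ⊗ₜ c) ⊗ₜ (a' ⊗ₜ c'))) := by
  rw [tmul_pure ψ c c' a' a'']
  unfold OeqLHS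
  simp only [coe_comp, comp_apply, LinearEquiv.coe_coe, lTensor_tmul, id_coe, id_eq]
  generalize ψ (a' ⊗ₜ[k] c') = w
  induction w using TensorProduct.induction_on with
  | zero =>
      simp only [map_zero, tmul_zero_right, TensorProduct.tmul_zero]
  | tmul d b =>
      simp only [coe_comp, comp_apply, LinearEquiv.coe_coe, TensorProduct.assoc_tmul,
        TensorProduct.assoc_symm_tmul, TensorProduct.map_tmul, lTensor_tmul, rTensor_tmul,
        mul'_apply, LinearMap.mulLeft_apply, LinearMap.mulRight_apply, id_coe, id_eq]
      rw [tmul_pure]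
      generalize ψ (a ⊗ₜ[k] (c * d)) = v
      induction v using TensorProduct.induction_on with
      | zero => simp only [map_zero, TensorProduct.zero_tmul]
      | tmul e f =>
          simp only [coe_comp, comp_apply, LinearEquiv.coe_coe, TensorProduct.assoc_tmul,
        TensorProduct.assoc_symm_tmul, TensorProduct.map_tmul, lTensor_tmul, rTensor_tmul,
        mul'_apply, LinearMap.mulLeft_apply, LinearMap.mulRight_apply, id_coe, id_eq, mul_assoc]
      | add u v hu hv =>
          simp only [TensorProduct.add_tmul, map_add, hu, hv]
  | add u v hu hv =>
      simp only [map_add, tmul_add_right, TensorProduct.tmul_add, hu, hv]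
end Aux
end Paper

open Paper in
/-- `m^ψ` is associative iff `ψ` satisfies the condition (Oeq). -/
theorem twistMul_assoc_iff_Oeq
    (k : Type*) [Field k] (A : Type*) [Ring A] [Algebra k A]
    (C : Type*) [Ring C] [Algebra k C] (ψ : A ⊗[k] C →ₗ[k] C ⊗[k] A) :
    IsTwistingMap k A C ψ ↔ OeqLHS k A C ψ = OeqRHS k A C ψ := by
  constructor
  · intro h
    ext a c a' c'
    simp only [TensorProduct.AlgebraTensorModule.curry_apply, TensorProduct.curry_apply,
      LinearMap.coe_restrictScalars, LinearMap.coe_comp, Function.comp_apply,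
      TensorProduct.mk_apply]
    have h1 := Paper.G1 ψ 1 c c' a a' 1
    have h2 := Paper.G2 ψ 1 c c' a a' 1
    simp only [LinearMap.mulLeft_one, LinearMap.mulRight_one, TensorProduct.map_id,
      LinearMap.id_coe, id_eq] at h1 h2
    rw [← h1, ← h2]
    exact (h _ _ _).symm
  · intro h x y z
    induction x using TensorProduct.induction_on with
    | zero => simp only [tmul_zero_left]
    | add u v hu hv => simp only [tmul_add_left, hu, hv]
    | tmul c₀ a =>
      induction y using TensorProduct.induction_on with
      | zero => simp only [tmul_zero_left, tmul_zero_right]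
      | add u v hu hv => simp only [tmul_add_left, tmul_add_right, hu, hv]
      | tmul c a' =>
        induction z using TensorProduct.induction_on with
        | zero => simp only [tmul_zero_right]
        | add u v hu hv => simp only [tmul_add_right, hu, hv]
        | tmul c' a'' => rw [Paper.G1, Paper.G2, h]
end
end

section
/- Let ψ: A⊗C → C⊗A be a twisting map (m^ψ associative). (i) If ψ is left normal then ψ satisfies the distributive law (C1); (ii) if ψ is right normal then ψ satisfies the distributive law (C2); (iii) if ψ is right normal and satisfies (C1), then ψ also satisfies (C2); (iv) if ψ is left normal and satisfies (C2), then ψ also satisfies (C1). -/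
open TensorProduct LinearMap Function

noncomputable section
section Aux
open Paper

variable {k : Type*} [Field k] {A : Type*} [Ring A] [Algebra k A]
  {C : Type*} [Ring C] [Algebra k C]

set_option synthInstance.maxHeartbeats 800000 in
lemma tmul_apply' (ψ : A ⊗[k] C →ₗ[k] C ⊗[k] A) (c c' : C) (a a' : A) :
    tmul k A C ψ (c ⊗ₜ a) (c' ⊗ₜ a')
      = TensorProduct.map (LinearMap.mulLeft k c) (LinearMap.mulRight k a') (ψ (a ⊗ₜ c')) := by
  unfold Paper.tmul Paper.tmulMap
  simp only [coe_comp, comp_apply, LinearEquiv.coe_coe, assoc_symm_tmul, map_tmul,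
    assoc_tmul, id_coe, id_eq, lTensor_tmul]
  induction ψ (a ⊗ₜ c') using TensorProduct.induction_on with
  | zero => simp
  | tmul d b => simp [mul'_apply]
  | add u v hu hv =>
      simp only [TensorProduct.add_tmul, TensorProduct.tmul_add, map_add, hu, hv]

set_option synthInstance.maxHeartbeats 800000 in
lemma auxR1 (ψ : A ⊗[k] C →ₗ[k] C ⊗[k] A) (a : A) (w : C ⊗[k] A) :
    lTensor C (LinearMap.mul' k A) ((TensorProduct.assoc k C A A)
        (rTensor A ψ ((TensorProduct.assoc k A C A).symm (a ⊗ₜ w))))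
      = tmul k A C ψ ((1 : C) ⊗ₜ a) w := by
  induction w using TensorProduct.induction_on with
  | zero => simp [Paper.tmul, TensorProduct.tmul_zero]
  | tmul c' a' =>
      rw [tmul_apply']
      simp only [assoc_symm_tmul, rTensor_tmul, LinearEquiv.coe_coe]
      induction ψ (a ⊗ₜ c') using TensorProduct.induction_on with
      | zero => simp
      | tmul d b => simp [mul'_apply]
      | add u v hu hv =>
          simp only [TensorProduct.add_tmul, map_add, hu, hv]
  | add u v hu hv =>
      simp only [Paper.tmul, TensorProduct.tmul_add, map_add, hu, hv]

set_option synthInstance.maxHeartbeats 800000 in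
lemma auxR2 (ψ : A ⊗[k] C →ₗ[k] C ⊗[k] A) (c' : C) (w : C ⊗[k] A) :
    rTensor A (LinearMap.mul' k C) ((TensorProduct.assoc k C C A).symm
        (lTensor C ψ ((TensorProduct.assoc k C A C) (w ⊗ₜ c'))))
      = tmul k A C ψ w (c' ⊗ₜ (1 : A)) := by
  induction w using TensorProduct.induction_on with
  | zero => simp [Paper.tmul, TensorProduct.zero_tmul]
  | tmul c1 a1 =>
      rw [tmul_apply']
      simp only [assoc_tmul, lTensor_tmul, LinearEquiv.coe_coe]
      induction ψ (a1 ⊗ₜ c') using TensorProduct.induction_on with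
      | zero => simp
      | tmul d b => simp [mul'_apply]
      | add u v hu hv =>
          simp only [TensorProduct.tmul_add, map_add, hu, hv]
  | add u v hu hv =>
      simp only [Paper.tmul, TensorProduct.add_tmul, map_add, hu, hv]

lemma tmul_one_one (ψ : A ⊗[k] C →ₗ[k] C ⊗[k] A) (b : A) (c : C) :
    tmul k A C ψ ((1 : C) ⊗ₜ b) (c ⊗ₜ (1 : A)) = ψ (b ⊗ₜ c) := by
  rw [tmul_apply', LinearMap.mulLeft_one, LinearMap.mulRight_one, TensorProduct.map_id,
    LinearMap.id_coe, id_eq]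

set_option synthInstance.maxHeartbeats 800000 in
lemma leftNormal_C1 (ψ : A ⊗[k] C →ₗ[k] C ⊗[k] A)
    (hψ : IsTwistingMap k A C ψ) (hln : LeftNormal k A C ψ) : DistLawC1 k A C ψ := by
  apply TensorProduct.ext_threefold
  intro a a' c
  simp only [coe_comp, comp_apply, LinearEquiv.coe_coe, assoc_tmul, rTensor_tmul,
    lTensor_tmul, mul'_apply]
  rw [auxR1]
  have h1 : tmul k A C ψ ((1 : C) ⊗ₜ a) ((1 : C) ⊗ₜ a') = (1 : C) ⊗ₜ (a * a') := by
    rw [tmul_apply', hln a]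
    simp [LinearMap.mulLeft_apply, LinearMap.mulRight_apply]
  rw [← tmul_one_one ψ a' c, ← tmul_one_one ψ (a * a') c, ← h1, hψ]

set_option synthInstance.maxHeartbeats 800000 in
lemma rightNormal_C2 (ψ : A ⊗[k] C →ₗ[k] C ⊗[k] A)
    (hψ : IsTwistingMap k A C ψ) (hrn : RightNormal k A C ψ) : DistLawC2 k A C ψ := by
  apply TensorProduct.ext'
  intro a y
  induction y using TensorProduct.induction_on with
  | zero => simp
  | add u v hu hv => simp only [TensorProduct.tmul_add, map_add, hu, hv]
  | tmul c c' => ?_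
  simp only [coe_comp, comp_apply, LinearEquiv.coe_coe, assoc_symm_tmul, rTensor_tmul,
    lTensor_tmul, mul'_apply]
  rw [auxR2]
  have h1 : tmul k A C ψ (c ⊗ₜ (1 : A)) (c' ⊗ₜ (1 : A)) = (c * c') ⊗ₜ (1 : A) := by
    rw [tmul_apply', hrn c']
    simp [LinearMap.mulLeft_apply, LinearMap.mulRight_apply]
  rw [← tmul_one_one ψ a (c * c'), ← h1, ← tmul_one_one ψ a c, ← hψ]

end Aux

open Paper in
/-- for a twisting map `ψ`:
(i) left normal → (C1); (ii) right normal → (C2);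
(iii) right normal and (C1) → (C2); (iv) left normal and (C2) → (C1). -/
theorem twistingMap_normal_distLaws
    (k : Type*) [Field k] (A : Type*) [Ring A] [Algebra k A]
    (C : Type*) [Ring C] [Algebra k C] (ψ : A ⊗[k] C →ₗ[k] C ⊗[k] A)
    (hψ : IsTwistingMap k A C ψ) :
    (LeftNormal k A C ψ → DistLawC1 k A C ψ)
    ∧ (RightNormal k A C ψ → DistLawC2 k A C ψ)
    ∧ (RightNormal k A C ψ → DistLawC1 k A C ψ → DistLawC2 k A C ψ)
    ∧ (LeftNormal k A C ψ → DistLawC2 k A C ψ → DistLawC1 k A C ψ) :=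
  ⟨fun h => leftNormal_C1 ψ hψ h, fun h => rightNormal_C2 ψ hψ h,
    fun h _ => rightNormal_C2 ψ hψ h, fun h _ => leftNormal_C1 ψ hψ h⟩
end
end

section
/- Let C, A and X be unital associative algebras over a field k. The following are equivalent: (1) there exists a normal twisting map ψ: A⊗C → C⊗A and an algebra isomorphism X ≅ C⊗^ψA; (2) X factorizes through C and A, i.e. there exist algebra morphisms u_C: C → X and u_A: A → X such that the linear map ξ := m_X∘(u_C⊗u_A): C⊗A → X is a bijection. -/
open TensorProduct LinearMap Function

noncomputable section
set_option synthInstance.maxHeartbeats 1000000 in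
open Paper in
/-- The twisted product of two pure tensors, computed. -/
lemma tmul_tmul_aux (k : Type*) [Field k] (A : Type*) [Ring A] [Algebra k A]
    (C : Type*) [Ring C] [Algebra k C] (ψ : A ⊗[k] C →ₗ[k] C ⊗[k] A)
    (c c' : C) (a a' : A) :
    tmul k A C ψ (c ⊗ₜ a) (c' ⊗ₜ a')
      = TensorProduct.map (LinearMap.mulLeft k c) (LinearMap.mulRight k a') (ψ (a ⊗ₜ c')) := by
  unfold Paper.tmul Paper.tmulMap
  simp only [LinearMap.coe_comp, Function.comp_apply, LinearEquiv.coe_coe,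
    TensorProduct.assoc_symm_tmul, TensorProduct.map_tmul, TensorProduct.assoc_tmul,
    LinearMap.id_coe, id_eq, LinearMap.lTensor_tmul]
  generalize ψ (a ⊗ₜ c') = w
  induction w using TensorProduct.induction_on with
  | zero => simp
  | tmul c₁ a₁ =>
      simp [LinearMap.mul'_apply, LinearMap.mulLeft_apply, LinearMap.mulRight_apply]
  | add x y hx hy =>
      simp only [TensorProduct.tmul_add, TensorProduct.add_tmul, map_add] at *
      rw [hx, hy]

open Paper in
lemma tmul_add_left (k : Type*) [Field k] (A : Type*) [Ring A] [Algebra k A]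
    (C : Type*) [Ring C] [Algebra k C] (ψ : A ⊗[k] C →ₗ[k] C ⊗[k] A)
    (x y v : C ⊗[k] A) :
    tmul k A C ψ (x + y) v = tmul k A C ψ x v + tmul k A C ψ y v := by
  unfold Paper.tmul; rw [TensorProduct.add_tmul, map_add]

open Paper in
lemma tmul_add_right (k : Type*) [Field k] (A : Type*) [Ring A] [Algebra k A]
    (C : Type*) [Ring C] [Algebra k C] (ψ : A ⊗[k] C →ₗ[k] C ⊗[k] A)
    (x u v : C ⊗[k] A) :
    tmul k A C ψ x (u + v) = tmul k A C ψ x u + tmul k A C ψ x v := by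
  unfold Paper.tmul; rw [TensorProduct.tmul_add, map_add]

open Paper in
lemma tmul_zero_left (k : Type*) [Field k] (A : Type*) [Ring A] [Algebra k A]
    (C : Type*) [Ring C] [Algebra k C] (ψ : A ⊗[k] C →ₗ[k] C ⊗[k] A)
    (v : C ⊗[k] A) : tmul k A C ψ 0 v = 0 := by
  unfold Paper.tmul; rw [TensorProduct.zero_tmul, map_zero]

open Paper in
lemma tmul_zero_right (k : Type*) [Field k] (A : Type*) [Ring A] [Algebra k A]
    (C : Type*) [Ring C] [Algebra k C] (ψ : A ⊗[k] C →ₗ[k] C ⊗[k] A)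
    (v : C ⊗[k] A) : tmul k A C ψ v 0 = 0 := by
  unfold Paper.tmul; rw [TensorProduct.tmul_zero, map_zero]

open Paper in
/-- `X` is isomorphic to a twisted tensor product `C ⊗^ψ A` for some normal
twisting map `ψ` iff `X` factorizes through `C` and `A`. -/
theorem twistedTensorProduct_iff_factorization
    (k : Type*) [Field k] (A : Type*) [Ring A] [Algebra k A]
    (C : Type*) [Ring C] [Algebra k C] (X : Type*) [Ring X] [Algebra k X] :
    (∃ ψ : A ⊗[k] C →ₗ[k] C ⊗[k] A,
        IsTwistingMap k A C ψ ∧ RightNormal k A C ψ ∧ LeftNormal k A C ψ ∧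
        ∃ e : X ≃ₗ[k] C ⊗[k] A,
          e 1 = (1 : C) ⊗ₜ (1 : A) ∧ ∀ x y : X, e (x * y) = tmul k A C ψ (e x) (e y))
    ↔ (∃ (uC : C →ₐ[k] X) (uA : A →ₐ[k] X),
        Function.Bijective
          (LinearMap.mul' k X ∘ₗ TensorProduct.map uC.toLinearMap uA.toLinearMap)) := by
  constructor
  · rintro ⟨ψ, _htw, hRN, hLN, e, he1, hemul⟩
    have h11 : ψ ((1 : A) ⊗ₜ (1 : C)) = (1 : C) ⊗ₜ (1 : A) := hRN 1
    refine ⟨AlgHom.ofLinearMap (e.symm.toLinearMap ∘ₗ (TensorProduct.mk k C A).flip 1) ?_ ?_,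
      AlgHom.ofLinearMap (e.symm.toLinearMap ∘ₗ TensorProduct.mk k C A 1) ?_ ?_, ?_⟩
    · simp only [LinearMap.coe_comp, Function.comp_apply, LinearMap.flip_apply,
        TensorProduct.mk_apply, LinearEquiv.coe_coe]
      rw [← he1, e.symm_apply_apply]
    · intro x y
      apply e.injective
      simp only [LinearMap.coe_comp, Function.comp_apply, LinearMap.flip_apply,
        TensorProduct.mk_apply, LinearEquiv.coe_coe]
      rw [hemul, e.apply_symm_apply, e.apply_symm_apply, e.apply_symm_apply,
        tmul_tmul_aux, hRN]
      simp [LinearMap.mul'_apply]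
    · simp only [LinearMap.coe_comp, Function.comp_apply,
        TensorProduct.mk_apply, LinearEquiv.coe_coe]
      rw [← he1, e.symm_apply_apply]
    · intro x y
      apply e.injective
      simp only [LinearMap.coe_comp, Function.comp_apply,
        TensorProduct.mk_apply, LinearEquiv.coe_coe]
      rw [hemul, e.apply_symm_apply, e.apply_symm_apply, e.apply_symm_apply,
        tmul_tmul_aux, hLN]
      simp [LinearMap.mul'_apply]
    · have heq : (LinearMap.mul' k X ∘ₗ TensorProduct.map
          (AlgHom.ofLinearMap (e.symm.toLinearMap ∘ₗ (TensorProduct.mk k C A).flip 1)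
            (by simp only [LinearMap.coe_comp, Function.comp_apply, LinearMap.flip_apply,
                  TensorProduct.mk_apply, LinearEquiv.coe_coe]
                rw [← he1, e.symm_apply_apply])
            (by intro x y
                apply e.injective
                simp only [LinearMap.coe_comp, Function.comp_apply, LinearMap.flip_apply,
                  TensorProduct.mk_apply, LinearEquiv.coe_coe]
                rw [hemul, e.apply_symm_apply, e.apply_symm_apply, e.apply_symm_apply,
                  tmul_tmul_aux, hRN]
                simp [LinearMap.mul'_apply])).toLinearMap
          (AlgHom.ofLinearMap (e.symm.toLinearMap ∘ₗ TensorProduct.mk k C A 1)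
            (by simp only [LinearMap.coe_comp, Function.comp_apply,
                  TensorProduct.mk_apply, LinearEquiv.coe_coe]
                rw [← he1, e.symm_apply_apply])
            (by intro x y
                apply e.injective
                simp only [LinearMap.coe_comp, Function.comp_apply,
                  TensorProduct.mk_apply, LinearEquiv.coe_coe]
                rw [hemul, e.apply_symm_apply, e.apply_symm_apply, e.apply_symm_apply,
                  tmul_tmul_aux, hLN]
                simp [LinearMap.mul'_apply])).toLinearMap)
          = e.symm.toLinearMap := by
        rw [AlgHom.toLinearMap_ofLinearMap, AlgHom.toLinearMap_ofLinearMap]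
        apply TensorProduct.ext'
        intro c a
        simp only [LinearMap.coe_comp, Function.comp_apply, TensorProduct.map_tmul,
          AlgHom.toLinearMap_apply, LinearMap.flip_apply,
          TensorProduct.mk_apply, LinearEquiv.coe_coe, LinearMap.mul'_apply]
        apply e.injective
        rw [hemul, e.apply_symm_apply, e.apply_symm_apply, e.apply_symm_apply,
          tmul_tmul_aux, h11]
        simp
      rw [heq]
      exact e.symm.bijective
  · rintro ⟨uC, uA, hbij⟩
    set ξ : C ⊗[k] A →ₗ[k] X :=
      LinearMap.mul' k X ∘ₗ TensorProduct.map uC.toLinearMap uA.toLinearMap with hξ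
    let E : (C ⊗[k] A) ≃ₗ[k] X := LinearEquiv.ofBijective ξ hbij
    have hEtmul : ∀ (c : C) (a : A), E (c ⊗ₜ a) = uC c * uA a := by
      intro c a
      show ξ (c ⊗ₜ a) = _
      simp [hξ]
    set ψ : A ⊗[k] C →ₗ[k] C ⊗[k] A :=
      E.symm.toLinearMap ∘ₗ LinearMap.mul' k X ∘ₗ
        TensorProduct.map uA.toLinearMap uC.toLinearMap with hψdef
    have hψ : ∀ (a : A) (c : C), ψ (a ⊗ₜ c) = E.symm (uA a * uC c) := by
      intro a c
      simp [hψdef]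
    have haux : ∀ (c : C) (a' : A) (w : C ⊗[k] A),
        E (TensorProduct.map (LinearMap.mulLeft k c) (LinearMap.mulRight k a') w)
          = uC c * E w * uA a' := by
      intro c a' w
      induction w using TensorProduct.induction_on with
      | zero => simp
      | tmul c₁ a₁ =>
          simp only [TensorProduct.map_tmul, LinearMap.mulLeft_apply,
            LinearMap.mulRight_apply, hEtmul, map_mul]
          rw [mul_assoc, mul_assoc, mul_assoc]
      | add x y hx hy => simp [map_add, hx, hy, mul_add, add_mul]
    have hkey : ∀ u v : C ⊗[k] A, tmul k A C ψ u v = E.symm (E u * E v) := by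
      intro u v
      induction u using TensorProduct.induction_on with
      | zero => simp [tmul_zero_left]
      | add x y hx hy => simp [tmul_add_left, hx, hy, map_add, add_mul]
      | tmul c a =>
        induction v using TensorProduct.induction_on with
        | zero => simp [tmul_zero_right]
        | add x y hx hy => simp [tmul_add_right, hx, hy, map_add, mul_add]
        | tmul c' a' =>
            rw [tmul_tmul_aux]
            apply E.injective
            rw [E.apply_symm_apply, haux, hψ, E.apply_symm_apply, hEtmul, hEtmul]
            rw [mul_assoc, mul_assoc, mul_assoc]
    have hE11 : E ((1 : C) ⊗ₜ (1 : A)) = 1 := by rw [hEtmul]; simp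
    refine ⟨ψ, ?_, ?_, ?_, E.symm, ?_, ?_⟩
    · intro x y z
      rw [hkey, hkey, hkey, hkey, E.apply_symm_apply, E.apply_symm_apply, mul_assoc]
    · intro c
      rw [hψ, map_one, one_mul, LinearEquiv.symm_apply_eq, hEtmul, map_one, mul_one]
    · intro a
      rw [hψ, map_one, mul_one, LinearEquiv.symm_apply_eq, hEtmul, map_one, one_mul]
    · rw [LinearEquiv.symm_apply_eq, hE11]
    · intro x y
      rw [hkey, E.apply_symm_apply, E.apply_symm_apply]
end
end

section
/- Let A and C be *-algebras over k, B a *-subalgebra of A, and F: B → C a *-algebra morphism. Let ψ: A⊗C → C⊗A satisfy the distributive laws (C1) and (C2) and be such that (c⊗a)* := ψ(a*⊗c*) defines a *-structure on the twisted tensor product algebra C⊗^ψA, and assume \barψ := π_B∘ψ is a B-bimodule morphism (so that m^ψ descends to C⊗_BA). Then the involution (c⊗a)* = ψ(a*⊗c*) descends to a well-defined *-structure on the twisted push-forward algebra C⊗^ψ_BA if and only if \barψ(ab⊗c) = \barψ(a⊗F(b)c) for all a∈A, b∈B, c∈C. -/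
open TensorProduct LinearMap Function

noncomputable section
open Paper in
/-- the involution `(c ⊗ a)* = ψ(a* ⊗ c*)` descends to the twisted push-forward
algebra `C ⊗^ψ_B A` iff `\barψ(ab ⊗ c) = \barψ(a ⊗ F(b)c)` for all `a, b, c`. -/
theorem star_descends_iff_innerLinear
    (k : Type*) [Field k] [StarRing k] [TrivialStar k]
    (A : Type*) [Ring A] [Algebra k A] [StarRing A] [StarModule k A]
    (C : Type*) [Ring C] [Algebra k C] [StarRing C] [StarModule k C]
    (B : Subalgebra k A) (hB : ∀ a ∈ B, star a ∈ B)
    (F : B →ₐ[k] C) (hF : ∀ b : B, F ⟨star (b : A), hB _ b.2⟩ = star (F b))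
    (ψ : A ⊗[k] C →ₗ[k] C ⊗[k] A)
    (h1 : DistLawC1 k A C ψ) (h2 : DistLawC2 k A C ψ)
    (hstar : ∀ x : C ⊗[k] A, (ψ ∘ₗ starFlip k C A) ((ψ ∘ₗ starFlip k C A) x) = x)
    (hbimodL : ∀ (b : B) (a : A) (c : C),
      (relSpan k A C B F).mkQ (ψ (((b : A) * a) ⊗ₜ c))
        = (relSpan k A C B F).mkQ (rTensor A (LinearMap.mulLeft k (F b)) (ψ (a ⊗ₜ c))))
    (hbimodR : ∀ (b : B) (a : A) (c : C),
      (relSpan k A C B F).mkQ (ψ (a ⊗ₜ (c * F b)))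
        = (relSpan k A C B F).mkQ (lTensor C (LinearMap.mulRight k (b : A)) (ψ (a ⊗ₜ c)))) :
    (∃ s : ((C ⊗[k] A) ⧸ relSpan k A C B F) →ₗ[k] ((C ⊗[k] A) ⧸ relSpan k A C B F),
      ∀ x : C ⊗[k] A,
        s ((relSpan k A C B F).mkQ x) = (relSpan k A C B F).mkQ ((ψ ∘ₗ starFlip k C A) x))
    ↔ (∀ (a : A) (b : B) (c : C),
        (relSpan k A C B F).mkQ (ψ ((a * (b : A)) ⊗ₜ c))
          = (relSpan k A C B F).mkQ (ψ (a ⊗ₜ (F b * c)))) := by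
  set π := (relSpan k A C B F).mkQ with hπ
  set S := ψ ∘ₗ starFlip k C A with hS
  constructor
  · rintro ⟨s, hs⟩ a b c
    set b' : B := ⟨star (b : A), hB _ b.2⟩ with hb'
    have hx : (star c : C) ⊗ₜ[k] ((b' : A) * star a) - (star c * F b') ⊗ₜ[k] (star a)
        ∈ relSpan k A C B F := by
      apply Submodule.subset_span
      exact ⟨star c, b', star a, rfl⟩
    have h0 : π ((star c : C) ⊗ₜ[k] ((b' : A) * star a) - (star c * F b') ⊗ₜ[k] (star a))
        = 0 := (Submodule.Quotient.mk_eq_zero _).2 hx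
    have h1 : s (π ((star c : C) ⊗ₜ[k] ((b' : A) * star a)
          - (star c * F b') ⊗ₜ[k] (star a))) = 0 := by rw [h0, map_zero]
    rw [hs, map_sub, map_sub] at h1
    have e1 : S ((star c : C) ⊗ₜ[k] ((b' : A) * star a)) = ψ ((a * (b : A)) ⊗ₜ c) := by
      simp [hS, hb', star_mul, star_star]
    have e2 : S ((star c * F b') ⊗ₜ[k] (star a)) = ψ (a ⊗ₜ (F b * c)) := by
      have : star (F b') = F b := by rw [hF b]; exact star_star _
      simp [hS, star_mul, star_star, this]
    rw [e1, e2] at h1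
    exact sub_eq_zero.mp h1
  · intro h
    have hker : relSpan k A C B F ≤ LinearMap.ker (π ∘ₗ S) := by
      refine Submodule.span_le.mpr ?_
      rintro x ⟨c, b, a, rfl⟩
      set b' : B := ⟨star (b : A), hB _ b.2⟩ with hb'
      have hFb : F b' = star (F b) := hF b
      simp only [SetLike.mem_coe, LinearMap.mem_ker, LinearMap.comp_apply, map_sub]
      have e1 : S (c ⊗ₜ[k] ((b : A) * a)) = ψ (((star a) * (b' : A)) ⊗ₜ (star c)) := by
        simp [hS, hb', star_mul]
      have e2 : S ((c * F b) ⊗ₜ[k] a) = ψ ((star a) ⊗ₜ (F b' * star c)) := by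
        simp [hS, star_mul, hFb]
      rw [e1, e2, h (star a) b' (star c), sub_self]
    refine ⟨(relSpan k A C B F).liftQ (π ∘ₗ S) hker, fun x => ?_⟩
    exact Submodule.liftQ_apply _ _ x
end
end
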